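/- Let s ≥ 2 and t ≥ 1 be integers and set p = ⌊s(t-1)/(s-1)⌋ if s ≤ t and p = t-1 if s > t. Then the condition 's = p + 2 - s(p+1-t) and s is even and s ≥ 4' (for s ≤ t), respectively 's = t+1 even' (for s > t), holds if and only if (s-1) | t and s ≥ 4 is even. Equivalently: for the tuple of s copies of t, n_{p+1} = p + 2 - (n_0 + ... + n_p) ≥ 4 with this number even and n_{p+2} = n_{p+1}, if and only if s-1 divides t and s ≥ 4 is even. -/

import Mathlib

/-!
For the constant tuple, `n j = s` for `j ≥ t` and `0` otherwise, so the partial sums are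
`s * (j - t)` and `p = t - 1 + k` with `k = (t - 1) / (s - 1)`. Then `n (p + 1) = n (p + 2) = s`
and `n (p + 1) = p + 2 - ∑ …` unfolds to `(s - 1) * (k + 1) = t`, which holds exactly when
`s - 1 ∣ t`. Both sides of the equivalence force `4 ≤ s`, since `n j ≤ s`.
-/

open Finset

theorem sum_range_ite_le (s t j : ℕ) :
    ∑ m ∈ range j, (if t ≤ m then s else 0) = s * (j - t) := by
  induction j with
  | zero => simp
  | succ j ih =>
    rw [sum_range_succ, ih]
    split_ifs with h
    · rw [show j + 1 - t = j - t + 1 by omega, Nat.mul_succ]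
    · rw [show j + 1 - t = 0 by omega, show j - t = 0 by omega, mul_zero, add_zero]

theorem mul_sub_le_iff_le_add_div {s t j : ℕ} (hs : 2 ≤ s) (ht : 1 ≤ t) :
    s * (j + 1 - t) ≤ j ↔ j ≤ t - 1 + (t - 1) / (s - 1) := by
  rcases Nat.lt_or_ge (j + 1) t with hj | hj
  · simp only [show j + 1 - t = 0 by omega, mul_zero, zero_le, true_iff]
    exact Nat.le_add_right_of_le (by omega)
  · obtain ⟨i, hi⟩ := Nat.exists_eq_add_of_le hj
    have hsi : s * i = (s - 1) * i + i := by
      rw [← Nat.succ_mul]; congr 1; omega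
    rw [hi, Nat.add_sub_cancel_left, hsi]
    have hdiv := Nat.le_div_iff_mul_le (x := i) (y := t - 1) (k := s - 1) (by omega)
    rw [mul_comm] at hdiv
    omega

theorem mul_div_add_one_eq_iff_dvd {d u : ℕ} (hd : 0 < d) :
    d * (u / d + 1) = u + 1 ↔ d ∣ u + 1 := by
  refine ⟨fun h => ⟨_, h.symm⟩, fun ⟨c, hc⟩ => ?_⟩
  have hc0 : 1 ≤ c := by rcases c with _ | c <;> simp_all
  have : u / d = c - 1 := by
    apply Nat.div_eq_of_lt_le
    · rw [Nat.sub_mul, one_mul, mul_comm, ← hc]; omega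
    · rw [Nat.sub_add_cancel hc0, mul_comm, ← hc]; omega
  rw [this, Nat.sub_add_cancel hc0, hc]

theorem stmt_14_general (s t : ℕ) (ht : 1 ≤ t)
    (a : Fin s → ℕ) (ha : ∀ i, a i = t)
    (n : ℕ → ℕ) (hn : ∀ j, n j = (Finset.univ.filter (fun i => a i ≤ j)).card)
    (p : ℕ) (hp : p = sSup {j : ℕ | ∑ m ∈ Finset.range (j + 1), n m ≤ j}) :
    (n (p + 1) = p + 2 - ∑ m ∈ Finset.range (p + 1), n m ∧
      4 ≤ n (p + 1) ∧ Even (n (p + 1)) ∧ n (p + 2) = n (p + 1)) ↔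
    ((s - 1) ∣ t ∧ 4 ≤ s ∧ Even s) := by
  obtain rfl : a = fun _ => t := funext ha
  obtain rfl : n = fun j => if t ≤ j then s else 0 := by
    ext j
    rw [hn]
    split_ifs with h <;> simp [h]
  by_cases hs : 4 ≤ s
  swap
  · have hlt : (if t ≤ p + 1 then s else 0) < 4 := by split_ifs <;> omega
    exact iff_of_false (fun h => hlt.not_ge h.2.1) (fun h => hs h.2.1)
  -- equals `s * (t - 1) / (s - 1)`, and `t - 1` when `s > t`, as in the paper
  obtain rfl : p = t - 1 + (t - 1) / (s - 1) := by
    rw [hp, ← csSup_Iic (a := t - 1 + (t - 1) / (s - 1))]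
    congr 1
    ext j
    simp only [sum_range_ite_le, Set.mem_ofPred_eq, Set.mem_Iic]
    exact mul_sub_le_iff_le_add_div (by omega) ht
  have hdvd := mul_div_add_one_eq_iff_dvd (d := s - 1) (u := t - 1) (by omega)
  rw [Nat.sub_add_cancel ht] at hdvd
  generalize (t - 1) / (s - 1) = k at hdvd ⊢
  clear hp
  simp only [sum_range_ite_le, if_pos (show t ≤ t - 1 + k + 1 by omega),
    if_pos (show t ≤ t - 1 + k + 2 by omega), show t - 1 + k + 1 - t = k by omega]
  have hsk : s * k + s = (s - 1) * (k + 1) + (k + 1) := by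
    zify [show 1 ≤ s by omega]; ring
  constructor
  · rintro ⟨h1, h2, h3, -⟩
    exact ⟨hdvd.mp (by omega), h2, h3⟩
  · rintro ⟨h1, h2, h3⟩
    have hk := hdvd.mpr h1
    exact ⟨by omega, h2, h3, trivial⟩

theorem stmt_14 (s t : ℕ) (hs : 2 ≤ s) (ht : 1 ≤ t)
    (a : Fin s → ℕ) (ha : ∀ i, a i = t)
    (n : ℕ → ℕ) (hn : ∀ j, n j = (Finset.univ.filter (fun i => a i ≤ j)).card)
    (p : ℕ) (hp : p = sSup {j : ℕ | ∑ m ∈ Finset.range (j + 1), n m ≤ j}) :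
    (n (p + 1) = p + 2 - ∑ m ∈ Finset.range (p + 1), n m ∧
      4 ≤ n (p + 1) ∧ Even (n (p + 1)) ∧ n (p + 2) = n (p + 1)) ↔
    ((s - 1) ∣ t ∧ 4 ≤ s ∧ Even s) :=
  stmt_14_general s t ht a ha n hn p hp
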